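/- Let x = p/q be an irreducible fraction with 0 < x < 1, x ≠ 1/2, and let F(x) = x/(1+x) = p/(p+q). If x < 1/2 then the reduced degree sequence of G_{F(x)} contains no entry equal to 5, i.e. P(5, F(x)) = 0; if x > 1/2 then it contains exactly 2p − q entries equal to 5, i.e. P(5, F(x)) = (2x − 1)/(x + 1). -/

import Mathlib

/-- Symbols for paths in the Farey binary tree. -/
inductive LR
  | L
  | R
deriving DecidableEq

/-- One step in the Farey binary tree: update the current pair of fractions
(represented as pairs (numerator, denominator) of naturals). -/
def fareyStep : ((ℕ × ℕ) × (ℕ × ℕ)) → LR → ((ℕ × ℕ) × (ℕ × ℕ))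
  | ((a, b), (c, d)), LR.L => ((a, b), (a + c, b + d))
  | ((a, b), (c, d)), LR.R => ((a + c, b + d), (c, d))

/-- The final pair of fractions of a word: after reading the first symbol `L`
the current pair is (0/1, 1/1); the remaining symbols update it. -/
def finalPair (w : List LR) : (ℕ × ℕ) × (ℕ × ℕ) :=
  w.tail.foldl fareyStep ((0, 1), (1, 1))

/-- The value ⟨w⟩ of a word: the mediant of its final pair, as (numerator, denominator). -/
def value (w : List LR) : ℕ × ℕ :=
  ((finalPair w).1.1 + (finalPair w).2.1, (finalPair w).1.2 + (finalPair w).2.2)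

/-- A word over {L,R} is a Farey word when its first symbol is `L`. -/
def IsFareyWord (w : List LR) : Prop := w.head? = some LR.L

/-- Concatenation of degree sequences:
[a₁,…,a_s] ⊕ [b₁,…,b_t] = [a₁+1, a₂, …, a_{s−1}, a_s+b₁, b₂, …, b_{t−1}, b_t+1]. -/
def oplus (A B : List ℕ) : List ℕ :=
  (A.dropLast.modifyHead (· + 1)) ++ [A.getLastD 0 + B.headD 0] ++ B.tail.dropLast
    ++ [B.getLastD 0 + 1]

/-- Update of the pair (D(left ancestor), D(right ancestor)) of unreduced degree
sequences along one symbol. -/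
def degStep : (List ℕ × List ℕ) → LR → (List ℕ × List ℕ)
  | (A, B), LR.L => (A, oplus A B)
  | (A, B), LR.R => (oplus A B, B)

/-- The pair (D(a/b), D(c/d)) of unreduced degree sequences of the final pair of a word;
0/1 and 1/1 are both assigned the list [1,1]. -/
def degPair (w : List LR) : List ℕ × List ℕ :=
  w.tail.foldl degStep ([1, 1], [1, 1])

/-- The unreduced degree sequence D(⟨w⟩) = D(a/b) ⊕ D(c/d) of the value of a word. -/
def Dseq (w : List LR) : List ℕ :=
  oplus (degPair w).1 (degPair w).2

/-- Reduction: [k₁,…,k_{q+1}] becomes [k₂,…,k_q, k₁+k_{q+1}]; the last entry is the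
boundary degree and the remaining ones are the inner degrees. -/
def reduce (D : List ℕ) : List ℕ :=
  D.tail.dropLast ++ [D.headD 0 + D.getLastD 0]

/-- The reduced degree sequence of the Haros graph G_{⟨w⟩}. -/
def degSeq (w : List LR) : List ℕ := reduce (Dseq w)

/-- Degree-distribution entropy S of the Haros graph G_{⟨w⟩}:
S = −Σ_k P(k)·ln P(k), summed over the degree values occurring in the reduced
degree sequence, where P(k) = m(k)/q. -/
noncomputable def Sent (w : List LR) : ℝ :=
  -∑ k ∈ (degSeq w).toFinset,
    (((degSeq w).count k : ℝ) / ((value w).2 : ℝ)) *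
      Real.log (((degSeq w).count k : ℝ) / ((value w).2 : ℝ))

/-- Reduced entropy H of the Haros graph G_{⟨w⟩} (with the convention 0·ln 0 = 0,
automatic since Real.log 0 = 0). -/
noncomputable def Hent (w : List LR) : ℝ :=
  let x : ℝ := ((value w).1 : ℝ) / ((value w).2 : ℝ)
  if x ≤ 1 / 2 then
    Sent w + 2 * x * Real.log x + (1 - 2 * x) * Real.log (1 - 2 * x)
  else
    Sent w + 2 * (1 - x) * Real.log (1 - x) + (2 * x - 1) * Real.log (2 * x - 1)

/-!
Write `F(x) = ⟨w⟩`: then `w` has the prefix `LL`, followed by `L` when `x < 1/2` (so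
`F(x) < 1/3`) and by `R` when `x > 1/2` (so `1/3 < F(x) < 1/2`). Splitting each unreduced
sequence `D = [k₁, …, k_{q+1}]` into its ends `k₁, k_{q+1}` and its inner part, `⊕` keeps the
inner parts and inserts one new inner entry `last A + first B`. Counting 5s is then a matter
of tracking, along the Farey path, the number of 5s in the inner parts of the two ancestors
together with a few inequalities on their ends. Below `1/3` no 5 ever appears; between `1/3`
and `1/2` the ancestor `a/b` carries exactly `3a - b` of them, so `p/(p+q)` gets
`3p - (p + q) = 2p - q`.
-/

theorem foldl_induction₂ {α β ι : Type*} (P : α → β → Prop) (f : α → ι → α) (g : β → ι → β)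
    (step : ∀ a b i, P a b → P (f a i) (g b i)) (l : List ι) {a : α} {b : β} (h : P a b) :
    P (l.foldl f a) (l.foldl g b) := by
  induction l generalizing a b with
  | nil => exact h
  | cons i l ih => exact ih (step a b i h)

theorem finalPair_cons_append (s₀ : LR) (u t : List LR) :
    finalPair (s₀ :: (u ++ t)) = t.foldl fareyStep (finalPair (s₀ :: u)) :=
  List.foldl_append

theorem degPair_cons_append (s₀ : LR) (u t : List LR) :
    degPair (s₀ :: (u ++ t)) = t.foldl degStep (degPair (s₀ :: u)) :=
  List.foldl_append

theorem value_eq_add (w : List LR) : value w = (finalPair w).1 + (finalPair w).2 := rfl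

theorem foldl_fareyStep_mem {S : Set (ℕ × ℕ)} (hS : ∀ x ∈ S, ∀ y ∈ S, x + y ∈ S)
    (l : List LR) {fp : (ℕ × ℕ) × (ℕ × ℕ)} (h : fp.1 ∈ S ∧ fp.2 ∈ S) :
    (l.foldl fareyStep fp).1 ∈ S ∧ (l.foldl fareyStep fp).2 ∈ S := by
  refine List.foldlRecOn (motive := fun fp => fp.1 ∈ S ∧ fp.2 ∈ S) l fareyStep h
    fun ⟨⟨a, b⟩, c, d⟩ ⟨hx, hy⟩ s _ => ?_
  cases s
  · exact ⟨hx, hS _ hx _ hy⟩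
  · exact ⟨hS _ hx _ hy, hy⟩

theorem value_cons_append_mem {S : Set (ℕ × ℕ)} (hS : ∀ x ∈ S, ∀ y ∈ S, x + y ∈ S)
    (s₀ : LR) (u t : List LR) (h₁ : (finalPair (s₀ :: u)).1 ∈ S)
    (h₂ : (finalPair (s₀ :: u)).2 ∈ S) : value (s₀ :: (u ++ t)) ∈ S := by
  rw [value_eq_add, finalPair_cons_append]
  obtain ⟨hx, hy⟩ := foldl_fareyStep_mem hS t ⟨h₁, h₂⟩
  exact hS _ hx _ hy

theorem half_le_value_of_R (s₀ : LR) (t : List LR) :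
    (value (s₀ :: LR.R :: t)).2 ≤ 2 * (value (s₀ :: LR.R :: t)).1 :=
  value_cons_append_mem (S := {x | x.2 ≤ 2 * x.1}) (fun x hx y hy => by
    simp only [Set.mem_ofPred_eq, Prod.fst_add, Prod.snd_add] at *; omega)
    s₀ [LR.R] t (by cases s₀ <;> decide) (by cases s₀ <;> decide)

theorem value_le_third_of_LL (s₀ : LR) (t : List LR) :
    3 * (value (s₀ :: LR.L :: LR.L :: t)).1 ≤ (value (s₀ :: LR.L :: LR.L :: t)).2 :=
  value_cons_append_mem (S := {x | 3 * x.1 ≤ x.2}) (fun x hx y hy => by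
    simp only [Set.mem_ofPred_eq, Prod.fst_add, Prod.snd_add] at *; omega)
    s₀ [LR.L, LR.L] t (by cases s₀ <;> decide) (by cases s₀ <;> decide)

/-- An unreduced degree sequence `[k₁, …, k_{q+1}]`, split into its ends and its inner part. -/
structure Bordered where
  first : ℕ
  inner : List ℕ
  last : ℕ

namespace Bordered

def toList (A : Bordered) : List ℕ := A.first :: A.inner ++ [A.last]

@[simps]
def oplus (A B : Bordered) : Bordered :=
  ⟨A.first + 1, A.inner ++ (A.last + B.first) :: B.inner, B.last + 1⟩

def step : Bordered × Bordered → LR → Bordered × Bordered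
  | (A, B), LR.L => (A, A.oplus B)
  | (A, B), LR.R => (A.oplus B, B)

def toListPair (X : Bordered × Bordered) : List ℕ × List ℕ := (X.1.toList, X.2.toList)

theorem oplus_toList (A B : Bordered) : _root_.oplus A.toList B.toList = (A.oplus B).toList := by
  rw [_root_.oplus, toList, toList, List.dropLast_concat, List.getLastD_concat,
    List.getLastD_concat, List.cons_append, List.tail_cons, List.dropLast_concat]
  simp [Bordered.oplus, toList]

theorem reduce_toList (A : Bordered) : reduce A.toList = A.inner ++ [A.first + A.last] := by
  rw [reduce, toList, List.getLastD_concat, List.cons_append, List.tail_cons,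
    List.dropLast_concat]
  rfl

theorem degStep_toListPair (X : Bordered × Bordered) (s : LR) :
    degStep (toListPair X) s = toListPair (step X s) := by
  obtain ⟨A, B⟩ := X
  cases s <;> simp [degStep, step, toListPair, oplus_toList]

theorem foldl_degStep_toListPair (l : List LR) (X : Bordered × Bordered) :
    l.foldl degStep (toListPair X) = toListPair (l.foldl step X) :=
  List.foldl_hom toListPair degStep_toListPair

theorem count_inner_oplus (k : ℕ) (A B : Bordered) :
    (A.oplus B).inner.count k
      = A.inner.count k + (if A.last + B.first = k then 1 else 0) + B.inner.count k := by
  simp only [oplus, List.count_append, List.count_cons, beq_iff_eq]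
  ring

theorem count_reduce_toList_oplus (k : ℕ) (A B : Bordered) :
    (reduce (A.oplus B).toList).count k
      = A.inner.count k + (if A.last + B.first = k then 1 else 0) + B.inner.count k
        + (if A.first + B.last + 2 = k then 1 else 0) := by
  rw [reduce_toList, List.count_append, count_inner_oplus]
  simp [oplus, List.count_singleton, add_add_add_comm, beq_iff_eq]

end Bordered

open Bordered

theorem degSeq_eq_of_degPair_eq {w : List LR} {X : Bordered × Bordered}
    (h : degPair w = toListPair X) : degSeq w = reduce (X.1.oplus X.2).toList := by
  rw [degSeq, Dseq, h, toListPair, oplus_toList]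

theorem degPair_cons_append_eq_toListPair (s₀ : LR) (u t : List LR) (X : Bordered × Bordered)
    (h : degPair (s₀ :: u) = toListPair X) :
    degPair (s₀ :: (u ++ t)) = toListPair (t.foldl step X) := by
  rw [degPair_cons_append, h, foldl_degStep_toListPair]

section BelowThird

/-- Along the subtree below `1/3`, starting from `(D(0/1), D(1/3)) = ([1,1], [2,3,2,3])`. -/
def LowerInv (A B : Bordered) : Prop :=
  A.inner.count 5 = 0 ∧ B.inner.count 5 = 0 ∧ A.last + B.first ≠ 5 ∧
    A.first + A.last ≠ 4 ∧ B.first + B.last ≠ 4 ∧ 1 ≤ A.first ∧ 3 ≤ B.last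

theorem lowerInv_step {A B : Bordered} (h : LowerInv A B) (s : LR) :
    LowerInv (step (A, B) s).1 (step (A, B) s).2 := by
  unfold LowerInv at h ⊢
  cases s <;> simp only [step, oplus_first, oplus_last, count_inner_oplus] <;> split_ifs <;> omega

theorem count_five_degSeq_of_LL (s₀ : LR) (t : List LR) :
    (degSeq (s₀ :: LR.L :: LR.L :: t)).count 5 = 0 := by
  let X₀ : Bordered × Bordered := (⟨1, [], 1⟩, ⟨2, [3, 2], 3⟩)
  have hX : LowerInv (t.foldl step X₀).1 (t.foldl step X₀).2 :=
    List.foldlRecOn (motive := fun X => LowerInv X.1 X.2) t step (by simp [LowerInv, X₀])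
      fun _ hX s _ => lowerInv_step hX s
  have hd : degPair (s₀ :: LR.L :: LR.L :: t) = toListPair (t.foldl step X₀) :=
    degPair_cons_append_eq_toListPair s₀ [LR.L, LR.L] t X₀ rfl
  rw [degSeq_eq_of_degPair_eq hd, count_reduce_toList_oplus]
  unfold LowerInv at hX
  split_ifs <;> omega

end BelowThird

section ThirdToHalf

/-- Along the subtree between `1/3` and `1/2`, starting from
`(D(1/3), D(1/2)) = ([2,3,2,3], [2,2,2])`; here `x = (a, b)` and `y = (c, d)` are the
fractions `a/b < c/d`. The inner part of `A` carries `3a - b` fives; that of `B` carries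
`3c - d`, except for `c/d = 1/2`, where the missing five is the junction `3 + 2` of the
next mediant. -/
def UpperInv (x y : ℕ × ℕ) (A B : Bordered) : Prop :=
  A.inner.count 5 + x.2 = 3 * x.1 ∧
    B.inner.count 5 + (if A.last + B.first = 5 then 1 else 0) + y.2 = 3 * y.1 ∧
    (A.last + B.first = 5 ↔ B.first + B.last = 4) ∧
    5 ≤ A.first + A.last ∧ 2 ≤ A.first ∧ 2 ≤ B.last

theorem upperInv_step {fp : (ℕ × ℕ) × (ℕ × ℕ)} {X : Bordered × Bordered}
    (h : UpperInv fp.1 fp.2 X.1 X.2) (s : LR) :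
    UpperInv (fareyStep fp s).1 (fareyStep fp s).2 (step X s).1 (step X s).2 := by
  obtain ⟨⟨a, b⟩, c, d⟩ := fp
  obtain ⟨A, B⟩ := X
  unfold UpperInv at h ⊢
  cases s <;> simp only [fareyStep, step, oplus_first, oplus_last, count_inner_oplus] at h ⊢ <;>
    split_ifs at h ⊢ <;> omega

theorem count_five_degSeq_add_of_LR (s₀ : LR) (t : List LR) :
    (degSeq (s₀ :: LR.L :: LR.R :: t)).count 5 + (value (s₀ :: LR.L :: LR.R :: t)).2
      = 3 * (value (s₀ :: LR.L :: LR.R :: t)).1 := by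
  let X₀ : Bordered × Bordered := (⟨2, [3, 2], 3⟩, ⟨2, [2], 2⟩)
  have hX : UpperInv (t.foldl fareyStep ((1, 3), (1, 2))).1
      (t.foldl fareyStep ((1, 3), (1, 2))).2 (t.foldl step X₀).1 (t.foldl step X₀).2 :=
    foldl_induction₂ (fun fp X => UpperInv fp.1 fp.2 X.1 X.2) fareyStep step
      (fun _ _ s h => upperInv_step h s) t (by simp [UpperInv, X₀])
  have hd : degPair (s₀ :: LR.L :: LR.R :: t) = toListPair (t.foldl step X₀) :=
    degPair_cons_append_eq_toListPair s₀ [LR.L, LR.R] t X₀ rfl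
  have hf : finalPair (s₀ :: LR.L :: LR.R :: t) = t.foldl fareyStep ((1, 3), (1, 2)) :=
    finalPair_cons_append s₀ [LR.L, LR.R] t
  rw [degSeq_eq_of_degPair_eq hd, count_reduce_toList_oplus, value_eq_add, hf]
  unfold UpperInv at hX
  simp only [Prod.fst_add, Prod.snd_add]
  split_ifs at hX ⊢ <;> omega

end ThirdToHalf

theorem two_mul_sub_div_add_eq {K : Type*} [Field K] (x : K) {y : K} (hy : y ≠ 0) :
    (2 * x - y) / (x + y) = (2 * (x / y) - 1) / (x / y + 1) := by
  rw [← div_div_div_cancel_right₀ hy, sub_div, add_div, div_self hy, mul_div_assoc]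

theorem statement12_general (p q : ℕ) (hpq : p < q)
    (hne : 2 * p ≠ q) (w' : List LR)
    (hval' : value w' = (p, p + q)) :
    (2 * p < q → (degSeq w').count 5 = 0) ∧
    (q < 2 * p → (degSeq w').count 5 = 2 * p - q ∧
      ((degSeq w').count 5 : ℝ) / ((p : ℝ) + (q : ℝ))
        = (2 * ((p : ℝ) / (q : ℝ)) - 1) / ((p : ℝ) / (q : ℝ) + 1)) := by
  rcases w' with _ | ⟨s₀, _ | ⟨_ | _, t⟩⟩
  · simp [value, finalPair] at hval'
    omega
  · simp [value, finalPair] at hval'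
    omega
  · rcases t with _ | ⟨_ | _, t⟩
    · simp [value, finalPair, fareyStep] at hval'
      exact (hne (by omega)).elim
    · have hle := value_le_third_of_LL s₀ t
      rw [hval'] at hle
      exact ⟨fun _ => count_five_degSeq_of_LL s₀ t, fun _ => by omega⟩
    · have hcount := count_five_degSeq_add_of_LR s₀ t
      rw [hval'] at hcount
      have hq : (q : ℝ) ≠ 0 := Nat.cast_ne_zero.mpr (by omega)
      refine ⟨fun _ => by omega, fun hlt => ⟨by omega, ?_⟩⟩
      rw [← two_mul_sub_div_add_eq _ hq, show (degSeq _).count 5 = 2 * p - q by omega]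
      push_cast [Nat.cast_sub hlt.le]
      ring
  · have hge := half_le_value_of_R s₀ t
    rw [hval'] at hge
    omega

/-- let x = p/q be irreducible with 0 < x < 1, x ≠ 1/2, and
F(x) = x/(1+x) = p/(p+q). If x < 1/2 then the reduced degree sequence of G_{F(x)} has
no entry equal to 5, i.e. P(5, F(x)) = 0; if x > 1/2 then it has exactly 2p − q entries
equal to 5, i.e. P(5, F(x)) = (2x − 1)/(x + 1). -/
theorem statement12 (p q : ℕ) (hcop : Nat.Coprime p q) (hp : 0 < p) (hpq : p < q)
    (hne : 2 * p ≠ q) (w' : List LR) (hw' : IsFareyWord w')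
    (hval' : value w' = (p, p + q)) :
    (2 * p < q → (degSeq w').count 5 = 0) ∧
    (q < 2 * p → (degSeq w').count 5 = 2 * p - q ∧
      ((degSeq w').count 5 : ℝ) / ((p : ℝ) + (q : ℝ))
        = (2 * ((p : ℝ) / (q : ℝ)) - 1) / ((p : ℝ) / (q : ℝ) + 1)) :=
  statement12_general p q hpq hne w' hval'
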